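/- Let ∑ aₙ be a weak-permutably convergent series of real numbers with sum s, and let σ be a permutation of the positive integers. Then every convergent bracketing of ∑ a_{σ(n)} converges to s. -/

import Mathlib

def SeriesConvTo (a : ℕ → ℝ) (s : ℝ) : Prop :=
  Filter.Tendsto (fun n => ∑ i ∈ Finset.range n, a i) Filter.atTop (nhds s)

def BracketConvTo (c : ℕ → ℝ) (f : ℕ → ℕ) (t : ℝ) : Prop :=
  StrictMono f ∧ f 0 = 0 ∧
    Filter.Tendsto (fun K => ∑ i ∈ Finset.range (f K), c i) Filter.atTop (nhds t)

def WeakPermConv (a : ℕ → ℝ) : Prop :=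
  (∃ s, SeriesConvTo a s) ∧
    ∀ σ : Equiv.Perm ℕ, ∃ f : ℕ → ℕ, ∃ t : ℝ, BracketConvTo (fun n => a (σ n)) f t

/-!
If `∑ aₙ` is absolutely convergent, every rearrangement has sum `s`, and so has every bracketing
of it. Otherwise the negative terms and the nonnegative terms both have divergent sums, and
inserting the negative terms sparsely enough among the nonnegative ones yields a rearrangement
whose partial sums tend to `+∞`; no bracketing of it converges, contradicting weak-permutable
convergence.
-/

open Filter Finset Topology

namespace Nat

variable {p q : ℕ → Prop} [DecidablePred p] [DecidablePred q]

theorem count_add_count_not (n : ℕ) : count p n + count (fun i => ¬p i) n = n := by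
  simp only [count_eq_card_filter_range, card_filter_add_card_filter_not, card_range]

theorem sum_filter_range_count {M : Type*} [AddCommMonoid M] (F : ℕ → M) (n : ℕ) :
    ∑ i ∈ (range n).filter p, F (count p i) = ∑ j ∈ range (count p n), F j := by
  induction n with
  | zero => simp
  | succ n ih =>
    rw [range_add_one, filter_insert, count_succ]
    by_cases h : p n
    · rw [if_pos h, if_pos h, sum_insert (by simp), ih, sum_range_succ, add_comm]
    · simp [h, ih]

theorem sum_filter_range_eq_sum_nth {M : Type*} [AddCommMonoid M] (F : ℕ → M) (n : ℕ) :
    ∑ i ∈ (range n).filter p, F i = ∑ j ∈ range (count p n), F (nth p j) := by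
  rw [← sum_filter_range_count]
  exact sum_congr rfl fun i hi => by rw [nth_count (mem_filter.1 hi).2]

theorem tendsto_count_atTop (hp : {n | p n}.Infinite) : Tendsto (count p) atTop atTop :=
  tendsto_atTop_atTop_of_monotone (count_monotone p) fun k =>
    ⟨nth p k, (count_nth_of_infinite hp k).ge⟩

theorem nth_mem_range_eq {u : ℕ → ℕ} (hu : StrictMono u) (k : ℕ) :
    nth (· ∈ Set.range u) k = u k := by
  have hinf : {n | n ∈ Set.range u}.Infinite := Set.infinite_range_of_injective hu.injective
  have h := nth_comp_of_strictMono hu (fun _ hk => hk) (fun hf => absurd hf hinf) (n := k)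
  have htrue : (fun i => u i ∈ Set.range u) = fun _ => True :=
    funext fun i => eq_true ⟨i, rfl⟩
  rw [htrue, nth_true] at h
  exact h.symm

noncomputable def nthEquiv (hp : {n | p n}.Infinite) : ℕ ≃ {n // p n} :=
  Equiv.ofBijective (fun j => ⟨nth p j, nth_mem_of_infinite hp j⟩)
    ⟨fun _ _ h => nth_injective hp (congrArg Subtype.val h),
     fun m => ⟨count p m, Subtype.ext (nth_count m.2)⟩⟩

theorem nthEquiv_symm_apply (hp : {n | p n}.Infinite) {i : ℕ} (hi : p i) :
    (nthEquiv hp).symm ⟨i, hi⟩ = count p i :=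
  (Equiv.symm_apply_eq _).2 (Subtype.ext (nth_count hi).symm)

section nthPerm

variable (hp : {n | p n}.Infinite) (hp' : {n | ¬p n}.Infinite)
  (hq : {n | q n}.Infinite) (hq' : {n | ¬q n}.Infinite)

noncomputable def nthPerm : Equiv.Perm ℕ :=
  (Equiv.sumCompl p).symm.trans <|
    (Equiv.sumCongr ((nthEquiv hp).symm.trans (nthEquiv hq))
      ((nthEquiv hp').symm.trans (nthEquiv hq'))).trans (Equiv.sumCompl q)

theorem nthPerm_apply_of_pos {i : ℕ} (hi : p i) :
    nthPerm hp hp' hq hq' i = nth q (count p i) := by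
  simp only [nthPerm, Equiv.trans_apply, Equiv.sumCompl_symm_apply_of_pos hi,
    Equiv.sumCongr_apply, Sum.map_inl, nthEquiv_symm_apply hp hi, Equiv.sumCompl_apply_inl]
  rfl

theorem nthPerm_apply_of_neg {i : ℕ} (hi : ¬p i) :
    nthPerm hp hp' hq hq' i = nth (fun n => ¬q n) (count (fun n => ¬p n) i) := by
  simp only [nthPerm, Equiv.trans_apply, Equiv.sumCompl_symm_apply_of_neg hi,
    Equiv.sumCongr_apply, Sum.map_inr, nthEquiv_symm_apply hp' hi, Equiv.sumCompl_apply_inr]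
  rfl

theorem sum_range_nthPerm {M : Type*} [AddCommMonoid M] (F : ℕ → M) (n : ℕ) :
    ∑ i ∈ range n, F (nthPerm hp hp' hq hq' i) =
      ∑ k ∈ range (count p n), F (nth q k) +
        ∑ k ∈ range (count (fun i => ¬p i) n), F (nth (fun i => ¬q i) k) := by
  rw [← sum_filter_add_sum_filter_not (range n) p,
    ← sum_filter_range_count (p := p), ← sum_filter_range_count (p := fun i => ¬p i)]
  congr 1
  · exact sum_congr rfl fun i hi => by rw [nthPerm_apply_of_pos _ _ _ _ (mem_filter.1 hi).2]
  · exact sum_congr rfl fun i hi => by rw [nthPerm_apply_of_neg _ _ _ _ (mem_filter.1 hi).2]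

end nthPerm

end Nat

open Nat in
open scoped Classical in
theorem exists_pred_tendsto_add_count_atTop {X : ℕ → ℝ} (hX : Tendsto X atTop atTop)
    (Y : ℕ → ℝ) :
    ∃ p : ℕ → Prop, {n | p n}.Infinite ∧ {n | ¬p n}.Infinite ∧
      Tendsto (fun n => X (count (fun i => ¬p i) n) + Y (count p n)) atTop atTop := by
  obtain ⟨g, hg, hgX⟩ := extraction_forall_of_eventually'
    (P := fun k m => ∀ m' ≥ m, (k + 1 : ℝ) - Y (k + 1) ≤ X m') fun k => by
      obtain ⟨N, hN⟩ := tendsto_atTop_atTop.1 hX ((k + 1 : ℝ) - Y (k + 1))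
      exact ⟨N, fun m hm m' hm' => hN m' (hm.trans hm')⟩
  -- At least `g k` positions outside `p` precede the `(k+1)`-st position `u k` of `p`.
  set u : ℕ → ℕ := fun k => g k + k
  have hu : StrictMono u := hg.add strictMono_id
  have hp : {n | n ∈ Set.range u}.Infinite := Set.infinite_range_of_injective hu.injective
  have hp' : {n | n ∉ Set.range u}.Infinite := by
    refine Set.infinite_of_injective_forall_mem (f := fun k => u k + 1)
      (fun i j hij => hu.injective (Nat.succ_injective hij)) fun k ⟨j, hj⟩ => ?_
    simp only [u] at hj
    rcases le_or_gt j k with hjk | hjk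
    · have := hg.monotone hjk; omega
    · have := hg.monotone (Nat.succ_le_of_lt hjk); have := hg (Nat.lt_succ_self k); omega
  refine ⟨(· ∈ Set.range u), hp, hp', tendsto_atTop_mono' _ ?_
    (tendsto_natCast_atTop_atTop.comp (tendsto_count_atTop hp))⟩
  filter_upwards [(tendsto_count_atTop hp).eventually_ge_atTop 1] with n hn
  obtain ⟨k, hk⟩ : ∃ k, count (· ∈ Set.range u) n = k + 1 :=
    ⟨_, (Nat.succ_pred_eq_of_pos hn).symm⟩
  have hlt : u k < n := nth_mem_range_eq hu k ▸ nth_lt_of_lt_count (by omega)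
  have hcount := count_add_count_not (p := (· ∈ Set.range u)) n
  have := hgX k (count (fun i => i ∉ Set.range u) n) (by simp only [u] at hlt; omega)
  simp only [Function.comp, hk]
  push_cast at this ⊢
  linarith

theorem Set.infinite_of_tendsto_sum_filter_atTop {p : ℕ → Prop} [DecidablePred p]
    {F : ℕ → ℝ}
    (h : Tendsto (fun n => ∑ i ∈ (Finset.range n).filter p, F i) atTop atTop) :
    {n | p n}.Infinite := by
  intro hfin
  obtain ⟨n, hn⟩ := (h.eventually_gt_atTop (∑ i ∈ hfin.toFinset, |F i|)).exists
  have hsub : (Finset.range n).filter p ⊆ hfin.toFinset := fun i hi => by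
    simpa using (mem_filter.1 hi).2
  have := calc ∑ i ∈ (Finset.range n).filter p, F i
      ≤ ∑ i ∈ (Finset.range n).filter p, |F i| := sum_le_sum fun i _ => le_abs_self _
    _ ≤ ∑ i ∈ hfin.toFinset, |F i| :=
      sum_le_sum_of_subset_of_nonneg hsub fun i _ _ => abs_nonneg _
  linarith

section Rearrangement

variable {a : ℕ → ℝ} {s : ℝ} (hs : Tendsto (fun n => ∑ i ∈ range n, a i) atTop (𝓝 s))
  (ha : ¬Summable a)
include hs ha

theorem tendsto_sum_filter_neg_atTop_of_not_summable :
    Tendsto (fun n => ∑ i ∈ (range n).filter (a · < 0), -a i) atTop atTop := by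
  have habs : Tendsto (fun n => ∑ i ∈ range n, |a i|) atTop atTop :=
    (not_summable_iff_tendsto_nat_atTop_of_nonneg fun i => abs_nonneg (a i)).1
      (mt Summable.of_abs ha)
  refine ((habs.atTop_add hs.neg).atTop_div_const two_pos).congr fun n => ?_
  rw [sum_filter, ← sum_neg_distrib, ← sum_add_distrib, sum_div]
  refine sum_congr rfl fun i _ => ?_
  split_ifs with hi
  · rw [abs_of_neg hi]; ring
  · rw [abs_of_nonneg (not_lt.1 hi)]; ring

theorem tendsto_sum_filter_nonneg_atTop_of_not_summable :
    Tendsto (fun n => ∑ i ∈ (range n).filter (¬a · < 0), a i) atTop atTop := by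
  refine (hs.add_atTop (tendsto_sum_filter_neg_atTop_of_not_summable hs ha)).congr fun n => ?_
  rw [← sum_filter_add_sum_filter_not (range n) (a · < 0), sum_neg_distrib]
  ring

theorem exists_perm_tendsto_sum_atTop_of_not_summable :
    ∃ π : Equiv.Perm ℕ, Tendsto (fun n => ∑ i ∈ range n, a (π i)) atTop atTop := by
  classical
  have hneg := tendsto_sum_filter_neg_atTop_of_not_summable hs ha
  have hnonneg := tendsto_sum_filter_nonneg_atTop_of_not_summable hs ha
  have hq := Set.infinite_of_tendsto_sum_filter_atTop hneg
  have hq' := Set.infinite_of_tendsto_sum_filter_atTop hnonneg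
  have hX : Tendsto (fun m => ∑ j ∈ range m, a (Nat.nth (¬a · < 0) j)) atTop atTop := by
    refine (hnonneg.comp (Nat.nth_strictMono hq').tendsto_atTop).congr fun m => ?_
    simp only [Function.comp, Nat.sum_filter_range_eq_sum_nth, Nat.count_nth_of_infinite hq']
  obtain ⟨p, hp, hp', hpXY⟩ :=
    exists_pred_tendsto_add_count_atTop hX fun c => ∑ j ∈ range c, a (Nat.nth (a · < 0) j)
  refine ⟨Nat.nthPerm hp hp' hq hq', hpXY.congr fun n => ?_⟩
  rw [Nat.sum_range_nthPerm, add_comm]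

end Rearrangement

/-- Proposition 2.1: every convergent bracketing of a rearrangement of a weak-permutably
convergent series with sum `s` converges to `s`. -/
theorem prop21 (a : ℕ → ℝ) (s : ℝ)
    (h : WeakPermConv a) (hs : SeriesConvTo a s) (σ : Equiv.Perm ℕ) :
    ∀ f : ℕ → ℕ, ∀ t : ℝ, BracketConvTo (fun n => a (σ n)) f t → t = s := by
  rintro f t ⟨hf, -, hft⟩
  by_cases ha : Summable a
  · have has : HasSum a s := tendsto_nhds_unique ha.hasSum.tendsto_sum_nat hs ▸ ha.hasSum
    have hσ := ((Equiv.hasSum_iff σ).2 has).tendsto_sum_nat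
    exact tendsto_nhds_unique hft (hσ.comp hf.tendsto_atTop)
  · obtain ⟨π, hπ⟩ := exists_perm_tendsto_sum_atTop_of_not_summable hs ha
    obtain ⟨g, t', hg, -, hgt⟩ := h.2 π
    exact absurd hgt (not_tendsto_nhds_of_tendsto_atTop (hπ.comp hg.tendsto_atTop) t')
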